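/- For every face F of the cone P of nonnegative ternary quartics, the set J_F = {q ∈ H₂ : q² ∈ F} is a linear subspace of H₂, i.e. it is closed under addition and under multiplication by real scalars. -/
import Mathlib


open MvPolynomial

noncomputable section

/-- The space of ternary (3-variable) real polynomials. `H d` corresponds to the
homogeneous polynomials of degree `d` via the predicate `IsHomogeneous`. -/
abbrev MvP : Type := MvPolynomial (Fin 3) ℝ

/-- The cone `P` of nonnegative ternary quartics. -/
def Pcone : Set MvP :=
  {f | f.IsHomogeneous 4 ∧ ∀ a : Fin 3 → ℝ, 0 ≤ eval a f}

/-- `F` is a face of the cone `P`. -/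
def IsFace (F : Set MvP) : Prop :=
  F ⊆ Pcone ∧
  (∀ a ∈ F, ∀ b ∈ F, a + b ∈ F) ∧
  (∀ c : ℝ, 0 ≤ c → ∀ a ∈ F, c • a ∈ F) ∧
  (∀ a ∈ Pcone, ∀ b ∈ Pcone, a + b ∈ F → a ∈ F ∧ b ∈ F)

/-- `J_F = {q ∈ H₂ : q² ∈ F}`. -/
def Jset (F : Set MvP) : Set MvP :=
  {q | q.IsHomogeneous 2 ∧ q ^ 2 ∈ F}

/-- For every face `F` of `P`, the set `J_F = {q ∈ H₂ : q² ∈ F}` is closed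
under addition and under multiplication by real scalars. -/
theorem stmt_0 (F : Set MvP) (hF : IsFace F) :
    (∀ q ∈ Jset F, ∀ r ∈ Jset F, q + r ∈ Jset F) ∧
    (∀ c : ℝ, ∀ q ∈ Jset F, c • q ∈ Jset F) := by
  obtain ⟨hsub, hadd, hsmul, hface⟩ := hF
  have hsq : ∀ q : MvP, q.IsHomogeneous 2 → q ^ 2 ∈ Pcone := by
    intro q hq
    refine ⟨by simpa using hq.pow 2, fun a => ?_⟩
    rw [map_pow]
    positivity
  constructor
  · rintro q ⟨hq2, hqF⟩ r ⟨hr2, hrF⟩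
    refine ⟨hq2.add hr2, ?_⟩
    have hsum : (q + r) ^ 2 + (q - r) ^ 2 ∈ F := by
      have h2 : (q + r) ^ 2 + (q - r) ^ 2 = (2 : ℝ) • q ^ 2 + (2 : ℝ) • r ^ 2 := by
        rw [two_smul, two_smul]; ring
      rw [h2]
      exact hadd _ (hsmul 2 (by norm_num) _ hqF) _ (hsmul 2 (by norm_num) _ hrF)
    exact (hface _ (hsq _ (hq2.add hr2)) _ (hsq _ (hq2.sub hr2)) hsum).1
  · intro c q hq
    obtain ⟨hq2, hqF⟩ := hq
    refine ⟨(smul_eq_C_mul q c ▸ (isHomogeneous_C _ c).mul hq2 : IsHomogeneous (c • q) (0+2)), ?_⟩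
    have : (c • q) ^ 2 = (c ^ 2) • q ^ 2 := by
      rw [smul_pow]
    rw [this]
    exact hsmul _ (sq_nonneg c) _ hqF
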